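/- arXiv:2007.01143 — 2 statements merged into one kernel-verified Lean document; each statement's English description precedes it below -/
import Mathlib

section
/- If f : ℝ → X is S^p-almost periodic (1 ≤ p < ∞) and uniformly continuous on ℝ, then f is Bohr almost periodic. -/
open MeasureTheory Set

theorem stepanov_ap_uniformly_continuous_implies_bohr_ap {X : Type*} [NormedAddCommGroup X]
    (f : ℝ → X) (p : ℝ) (hp : 1 ≤ p)
    (hloc : LocallyIntegrable (fun s => ‖f s‖ ^ p) volume)
    (hap : ∀ ε > 0, ∃ l > 0, ∀ a : ℝ, ∃ τ ∈ Icc a (a + l), ∀ t : ℝ,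
      (∫ s in t..t + 1, ‖f (s + τ) - f s‖ ^ p) ^ (1 / p) < ε)
    (huc : UniformContinuous f) :
    Continuous f ∧ ∀ ε > 0, ∃ l > 0, ∀ a : ℝ, ∃ τ ∈ Icc a (a + l), ∀ t : ℝ,
      ‖f (t + τ) - f t‖ < ε := by
  have hf : Continuous f := huc.continuous
  refine ⟨hf, ?_⟩
  intro ε hε
  have hp0 : (0:ℝ) < p := lt_of_lt_of_le one_pos hp
  obtain ⟨δ, hδ, hδ'⟩ := Metric.uniformContinuous_iff.mp huc (ε/4) (by positivity)
  set c : ℝ := min δ 1 / 2 with hc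
  have hmin : 0 < min δ 1 := lt_min hδ one_pos
  have hc0 : 0 < c := by positivity
  have hcδ : c < δ := lt_of_lt_of_le (half_lt_self hmin) (min_le_left _ _)
  have hc1 : c ≤ 1 := le_trans (le_of_lt (half_lt_self hmin)) (min_le_right _ _)
  set ε₀ : ℝ := (c * (ε/2) ^ p) ^ (1/p) with hε₀
  have hε₀pos : 0 < ε₀ := by
    apply Real.rpow_pos_of_pos
    positivity
  obtain ⟨l, hl, hτ⟩ := hap ε₀ hε₀pos
  refine ⟨l, hl, fun a => ?_⟩
  obtain ⟨τ, hmem, hbound⟩ := hτ a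
  refine ⟨τ, hmem, fun t => ?_⟩
  by_contra hcon
  push_neg at hcon
  have key : ∀ s ∈ Icc t (t + c), (ε/2)^p ≤ ‖f (s + τ) - f s‖ ^ p := by
    intro s hs
    apply Real.rpow_le_rpow (by positivity) _ (le_of_lt hp0)
    have hst : |s - t| ≤ c := by
      rw [abs_le]; constructor
      · linarith [hs.1]
      · linarith [hs.2]
    have h1 : ‖f (t + τ) - f (s + τ)‖ < ε/4 := by
      have := hδ' (a := t + τ) (b := s + τ) (by
        rw [Real.dist_eq]
        simp only [add_sub_add_right_eq_sub]
        calc |t - s| = |s - t| := abs_sub_comm _ _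
          _ ≤ c := hst
          _ < δ := hcδ)
      rwa [dist_eq_norm] at this
    have h2 : ‖f s - f t‖ < ε/4 := by
      have := hδ' (a := s) (b := t) (by
        rw [Real.dist_eq]; exact lt_of_le_of_lt hst hcδ)
      rwa [dist_eq_norm] at this
    have htri : ‖f (t + τ) - f t‖ ≤ ‖f (t + τ) - f (s + τ)‖ + ‖f (s + τ) - f s‖ + ‖f s - f t‖ := by
      calc ‖f (t + τ) - f t‖ = ‖(f (t + τ) - f (s + τ)) + (f (s + τ) - f s) + (f s - f t)‖ := by
            congr 1; abel
        _ ≤ _ := norm_add₃_le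
    linarith [hcon]
  have hg : Continuous fun s => ‖f (s + τ) - f s‖ ^ p := by
    apply Continuous.rpow_const
    · exact ((hf.comp (continuous_id.add continuous_const)).sub hf).norm
    · intro x; right; exact le_of_lt hp0
  have hint1 : IntervalIntegrable (fun s => ‖f (s + τ) - f s‖ ^ p) volume t (t + c) :=
    hg.intervalIntegrable _ _
  have hlow : c * (ε/2)^p ≤ ∫ s in t..t + c, ‖f (s + τ) - f s‖ ^ p := by
    have := intervalIntegral.integral_mono_on (le_of_lt (by linarith : t < t + c))
      intervalIntegrable_const hint1 key
    simpa using this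
  have hsplit : (∫ s in t..t + c, ‖f (s + τ) - f s‖ ^ p)
      ≤ ∫ s in t..t + 1, ‖f (s + τ) - f s‖ ^ p := by
    have h2 : IntervalIntegrable (fun s => ‖f (s + τ) - f s‖ ^ p) volume (t + c) (t + 1) :=
      hg.intervalIntegrable _ _
    have hnn : 0 ≤ ∫ s in (t + c)..(t + 1), ‖f (s + τ) - f s‖ ^ p :=
      intervalIntegral.integral_nonneg (by linarith) (fun x _ => by positivity)
    have := intervalIntegral.integral_add_adjacent_intervals hint1 h2
    linarith [this]
  have hfin : ε₀ ≤ (∫ s in t..t + 1, ‖f (s + τ) - f s‖ ^ p) ^ (1/p) := by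
    rw [hε₀]
    exact Real.rpow_le_rpow (by positivity) (le_trans hlow hsplit) (by positivity)
  exact absurd (hbound t) (not_lt.mpr hfin)
end

section
/- Let b ∈ APS^1(ℝ, ℝ) with b ≥ 0, and let (U₂(t,s))_{t≥s} be a uniformly bounded bi-almost periodic evolution family (‖U₂(t,s)‖ ≤ M). Then the rescaled family V(t,s) = e^{−∫_s^t b(σ)dσ} U₂(t,s) is bi-almost periodic: for every sequence (σ_n) there is a subsequence (τ_n), a function b̃, and a family Ũ₂ such that ‖V(t+τ_n, s+τ_n) − e^{−∫_s^t b̃(σ)dσ} Ũ₂(t,s)‖ → 0 uniformly in t ≥ s. -/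
/-!
Split `e^{-∫b(·+τₙ)} U₂(·+τₙ) - e^{-∫b̃} Ũ₂` as
`e^{-∫b(·+τₙ)} (U₂(·+τₙ) - Ũ₂) + (e^{-∫b(·+τₙ)} - e^{-∫b̃}) Ũ₂`; the first scalar is at most `1` and
`‖Ũ₂‖ ≤ M`, so everything reduces to uniform convergence of the scalar factors over `s ≤ t`.
On intervals of bounded length this follows from `|e^{-x} - e^{-y}| ≤ |x - y|` and the `S¹`
convergence. Long intervals are handled by a dichotomy for nonnegative `S¹`-almost periodic `b`:
either every window of some length `L` carries mass at least `c > 0`, and then so do the windows of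
`b̃`, making both exponentials uniformly small; or `b` vanishes a.e., and then so does `b̃`.
-/

open MeasureTheory Filter Topology

theorem MeasureTheory.LocallyIntegrable.intervalIntegrable {E : Type*} [NormedAddCommGroup E]
    {μ : Measure ℝ} [IsLocallyFiniteMeasure μ] {f : ℝ → E} (hf : LocallyIntegrable f μ) (a b : ℝ) :
    IntervalIntegrable f μ a b :=
  (hf.integrableOn_isCompact isCompact_uIcc).intervalIntegrable

theorem MeasureTheory.LocallyIntegrable.comp_add_right {E : Type*} [NormedAddCommGroup E]
    {f : ℝ → E} (hf : LocallyIntegrable f volume) (v : ℝ) :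
    LocallyIntegrable (fun x => f (x + v)) volume := by
  have h := (locallyIntegrable_map_homeomorph (Homeomorph.addRight v) (μ := volume) (f := f)).1
  rw [Homeomorph.coe_addRight, map_add_right_eq_self] at h
  exact h hf

section Windows

variable {h : ℝ → ℝ}

theorem integral_add_nat_mul_eq_sum (hh : LocallyIntegrable h volume) (s L : ℝ) (k : ℕ) :
    ∫ σ in s..s + k * L, h σ = ∑ i ∈ Finset.range k, ∫ σ in s + i * L..s + i * L + L, h σ := by
  have := intervalIntegral.sum_integral_adjacent_intervals (a := fun i : ℕ => s + i * L) (n := k)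
    (fun i _ => hh.intervalIntegrable _ _)
  simpa [add_mul, add_assoc] using this.symm

theorem integral_le_nat_mul_of_forall_integral_le (hh₀ : ∀ᵐ σ, 0 ≤ h σ)
    (hh : LocallyIntegrable h volume) {ε : ℝ} (hε : ∀ t, ∫ σ in t..t + 1, h σ ≤ ε)
    {s t : ℝ} {k : ℕ} (hst : s ≤ t) (htk : t ≤ s + k) :
    ∫ σ in s..t, h σ ≤ k * ε :=
  calc ∫ σ in s..t, h σ ≤ ∫ σ in s..s + k * 1, h σ :=
        intervalIntegral.integral_mono_interval le_rfl hst (by simpa using htk)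
          (ae_restrict_of_ae hh₀) (hh.intervalIntegrable _ _)
    _ = ∑ i ∈ Finset.range k, ∫ σ in s + i * 1..s + i * 1 + 1, h σ :=
        integral_add_nat_mul_eq_sum hh s 1 k
    _ ≤ ∑ _i ∈ Finset.range k, ε := Finset.sum_le_sum fun i _ => hε _
    _ = k * ε := by simp

theorem nat_mul_le_integral_of_forall_le_integral (hh₀ : ∀ᵐ σ, 0 ≤ h σ)
    (hh : LocallyIntegrable h volume) {L c : ℝ} (hL : 0 ≤ L) (hc : ∀ t, c ≤ ∫ σ in t..t + L, h σ)
    {s t : ℝ} {m : ℕ} (hst : s + m * L ≤ t) :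
    m * c ≤ ∫ σ in s..t, h σ :=
  calc (m : ℝ) * c = ∑ _i ∈ Finset.range m, c := by simp
    _ ≤ ∑ i ∈ Finset.range m, ∫ σ in s + i * L..s + i * L + L, h σ :=
        Finset.sum_le_sum fun i _ => hc _
    _ = ∫ σ in s..s + m * L, h σ := (integral_add_nat_mul_eq_sum hh s L m).symm
    _ ≤ ∫ σ in s..t, h σ :=
        intervalIntegral.integral_mono_interval le_rfl (by nlinarith [m.cast_nonneg (α := ℝ)]) hst
          (ae_restrict_of_ae hh₀) (hh.intervalIntegrable _ _)

end Windows

theorem Real.abs_exp_neg_sub_exp_neg_le {x y : ℝ} (hx : 0 ≤ x) (hy : 0 ≤ y) :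
    |Real.exp (-x) - Real.exp (-y)| ≤ |x - y| := by
  wlog hxy : x ≤ y generalizing x y
  · rw [abs_sub_comm, abs_sub_comm x]
    exact this hy hx (le_of_not_ge hxy)
  have hsplit : Real.exp (-y) = Real.exp (-x) * Real.exp (-(y - x)) := by
    rw [← Real.exp_add]; ring_nf
  have hle : Real.exp (-y) ≤ Real.exp (-x) := Real.exp_le_exp.2 (by linarith)
  rw [abs_of_nonneg (sub_nonneg.2 hle), abs_of_nonpos (sub_nonpos.2 hxy), hsplit]
  nlinarith [Real.one_sub_le_exp_neg (y - x), Real.exp_pos (-x),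
    Real.exp_le_one_iff.2 (neg_nonpos.2 hx)]

theorem norm_smul_sub_smul_le {E : Type*} [SeminormedAddCommGroup E] [NormedSpace ℝ E]
    (a b : ℝ) (x y : E) : ‖a • x - b • y‖ ≤ |a| * ‖x - y‖ + |a - b| * ‖y‖ := by
  calc ‖a • x - b • y‖ = ‖a • (x - y) + (a - b) • y‖ := by
        rw [smul_sub, sub_smul]; abel_nf
    _ ≤ |a| * ‖x - y‖ + |a - b| * ‖y‖ := by
        simpa only [norm_smul, Real.norm_eq_abs] using norm_add_le (a • (x - y)) ((a - b) • y)

/-- Convergence `f n → g` in the Stepanov norm `‖h‖_{S¹} = sup_t ∫_t^{t+1} |h|`. -/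
def StepanovTendsto (f : ℕ → ℝ → ℝ) (g : ℝ → ℝ) : Prop :=
  ∀ ε > 0, ∃ N : ℕ, ∀ n ≥ N, ∀ t : ℝ, ∫ σ in t..t + 1, |f n σ - g σ| < ε

/-- Bochner's sequential characterisation of Stepanov almost periodicity. -/
def IsStepanovAlmostPeriodic (b : ℝ → ℝ) : Prop :=
  ∀ u : ℕ → ℝ, ∃ φ : ℕ → ℕ, StrictMono φ ∧ ∃ g : ℝ → ℝ, LocallyIntegrable g volume ∧
    StepanovTendsto (fun n σ => b (σ + u (φ n))) g

namespace StepanovTendsto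

variable {f : ℕ → ℝ → ℝ} {g : ℝ → ℝ}

theorem comp_strictMono (h : StepanovTendsto f g) {φ : ℕ → ℕ} (hφ : StrictMono φ) :
    StepanovTendsto (fun n => f (φ n)) g := fun ε hε =>
  (h ε hε).imp fun _ hN n hn => hN (φ n) (hn.trans hφ.le_apply)

variable (hf : ∀ n, LocallyIntegrable (f n) volume) (hg : LocallyIntegrable g volume)
include hf hg

theorem exists_abs_integral_sub_lt (h : StepanovTendsto f g) (k : ℕ) {ε : ℝ} (hε : 0 < ε) :
    ∃ N : ℕ, ∀ n ≥ N, ∀ s t : ℝ, s ≤ t → t ≤ s + k →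
      |(∫ σ in s..t, f n σ) - ∫ σ in s..t, g σ| < ε := by
  obtain ⟨N, hN⟩ := h (ε / (k + 1)) (by positivity)
  refine ⟨N, fun n hn s t hst htk => ?_⟩
  have hdiff : LocallyIntegrable (fun σ => |f n σ - g σ|) volume :=
    ((hf n).sub hg).mono ((hf n).sub hg).aestronglyMeasurable.norm (ae_of_all _ fun _ => by simp)
  calc |(∫ σ in s..t, f n σ) - ∫ σ in s..t, g σ| = |∫ σ in s..t, (f n σ - g σ)| := by
        rw [intervalIntegral.integral_sub ((hf n).intervalIntegrable _ _)
          (hg.intervalIntegrable _ _)]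
    _ ≤ ∫ σ in s..t, |f n σ - g σ| := intervalIntegral.abs_integral_le_integral_abs hst
    _ ≤ k * (ε / (k + 1)) := integral_le_nat_mul_of_forall_integral_le
        (ae_of_all _ fun _ => abs_nonneg _) hdiff (fun t => (hN n hn t).le) hst htk
    _ < ε := by
        rw [mul_div_assoc', div_lt_iff₀ (by positivity)]
        nlinarith

theorem tendsto_integral (h : StepanovTendsto f g) {s t : ℝ} (hst : s ≤ t) :
    Tendsto (fun n => ∫ σ in s..t, f n σ) atTop (𝓝 (∫ σ in s..t, g σ)) :=
  Metric.tendsto_atTop.2 fun ε hε =>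
    (h.exists_abs_integral_sub_lt hf hg ⌈t - s⌉₊ hε).imp fun _ hN n hn =>
      hN n hn s t hst (by linarith [Nat.le_ceil (t - s)])

theorem integral_eq_zero (h : StepanovTendsto f g)
    (hf₀ : ∀ n s t, s ≤ t → ∫ σ in s..t, f n σ = 0) {s t : ℝ} (hst : s ≤ t) :
    ∫ σ in s..t, g σ = 0 :=
  tendsto_nhds_unique (h.tendsto_integral hf hg hst)
    (tendsto_const_nhds.congr fun n => (hf₀ n s t hst).symm)

theorem exists_abs_exp_neg_integral_sub_lt_of_uniform_mass (h : StepanovTendsto f g)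
    (hf₀ : ∀ n σ, 0 ≤ f n σ) (hg₀ : ∀ᵐ σ, 0 ≤ g σ) {L c : ℝ} (hL : 0 < L) (hc : 0 < c)
    (hmass : ∀ n t, c ≤ ∫ σ in t..t + L, f n σ) {ε : ℝ} (hε : 0 < ε) :
    ∃ N : ℕ, ∀ n ≥ N, ∀ s t : ℝ, s ≤ t →
      |Real.exp (-∫ σ in s..t, f n σ) - Real.exp (-∫ σ in s..t, g σ)| < ε := by
  have hgmass : ∀ t, c / 2 ≤ ∫ σ in t..t + L, g σ := by
    obtain ⟨N, hN⟩ := h.exists_abs_integral_sub_lt hf hg ⌈L⌉₊ (half_pos hc)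
    intro t
    have := hN N le_rfl t (t + L) (by linarith) (by linarith [Nat.le_ceil L])
    linarith [hmass N t, (abs_lt.1 this).2]
  obtain ⟨m, hm⟩ : ∃ m : ℕ, Real.exp (-(m * (c / 2))) < ε :=
    ((Real.tendsto_exp_neg_atTop_nhds_zero.comp
      (tendsto_natCast_atTop_atTop.atTop_mul_const (half_pos hc))).eventually
        (gt_mem_nhds hε)).exists
  obtain ⟨N, hN⟩ := h.exists_abs_integral_sub_lt hf hg ⌈m * L⌉₊ hε
  refine ⟨N, fun n hn s t hst => ?_⟩
  rcases le_or_gt t (s + m * L) with hshort | hlong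
  · refine (Real.abs_exp_neg_sub_exp_neg_le
      (intervalIntegral.integral_nonneg hst fun σ _ => hf₀ n σ)
      (intervalIntegral.integral_nonneg_of_ae hst hg₀)).trans_lt (hN n hn s t hst ?_)
    exact hshort.trans (by gcongr; exact Nat.le_ceil _)
  · have hdecay {k : ℝ → ℝ} (hk₀ : ∀ᵐ σ, 0 ≤ k σ) (hk : LocallyIntegrable k volume)
        (hkmass : ∀ t, c / 2 ≤ ∫ σ in t..t + L, k σ) : Real.exp (-∫ σ in s..t, k σ) < ε :=
      (Real.exp_le_exp.2 (neg_le_neg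
        (nat_mul_le_integral_of_forall_le_integral hk₀ hk hL.le hkmass hlong.le))).trans_lt hm
    exact abs_sub_lt_of_nonneg_of_lt (Real.exp_pos _).le
      (hdecay (ae_of_all _ (hf₀ n)) (hf n) fun t => (half_le_self hc.le).trans (hmass n t))
      (Real.exp_pos _).le (hdecay hg₀ hg hgmass)

end StepanovTendsto

namespace IsStepanovAlmostPeriodic

variable {b : ℝ → ℝ} (hb : IsStepanovAlmostPeriodic b) (hb₀ : ∀ t, 0 ≤ b t)
  (hbloc : LocallyIntegrable b volume)
include hb hb₀ hbloc

theorem uniform_mass_or_integral_eq_zero :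
    (∃ L > 0, ∃ c > 0, ∀ t, c ≤ ∫ σ in t..t + L, b σ) ∨ ∀ s t, s ≤ t → ∫ σ in s..t, b σ = 0 := by
  refine or_iff_not_imp_left.2 fun hmass => ?_
  push Not at hmass
  -- Translates of `b` centred in ever longer windows of ever smaller mass converge to some `g`
  -- of zero mass, and `b` itself is `S¹`-close to a translate of `g`.
  choose τ hτ using fun k : ℕ =>
    hmass (2 * (k + 1)) (by positivity) (1 / (k + 1)) (by positivity)
  obtain ⟨φ, hφ, g, hg, hconv⟩ := hb fun k => τ k + (k + 1)
  have hbtr : ∀ n, LocallyIntegrable (fun σ => b (σ + (τ (φ n) + (φ n + 1)))) volume :=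
    fun n => hbloc.comp_add_right _
  have hg_zero : ∀ s t, s ≤ t → ∫ σ in s..t, g σ = 0 := by
    intro s t hst
    refine tendsto_nhds_unique (hconv.tendsto_integral hbtr hg hst) ?_
    refine tendsto_of_tendsto_of_tendsto_of_le_of_le' tendsto_const_nhds
      (tendsto_one_div_add_atTop_nhds_zero_nat.comp hφ.tendsto_atTop)
      (Eventually.of_forall fun n => intervalIntegral.integral_nonneg hst fun _ _ => hb₀ _) ?_
    filter_upwards [hφ.tendsto_atTop.eventually_ge_atTop ⌈max |s| |t|⌉₊] with n hn
    have hK : max |s| |t| ≤ φ n := (Nat.le_ceil _).trans (by exact_mod_cast hn)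
    have hs := neg_abs_le s
    have ht := le_abs_self t
    rw [intervalIntegral.integral_comp_add_right]
    refine le_trans ?_ (hτ (φ n)).le
    refine intervalIntegral.integral_mono_interval ?_ (by linarith) ?_
      (ae_of_all _ fun _ => hb₀ _) (hbloc.intervalIntegrable _ _)
    · linarith [le_max_left |s| |t|]
    · linarith [le_max_right |s| |t|]
  intro s t hst
  refine abs_eq_zero.1 (le_antisymm (le_of_forall_pos_lt_add fun ε hε => ?_) (abs_nonneg _))
  obtain ⟨N, hN⟩ := hconv.exists_abs_integral_sub_lt hbtr hg ⌈t - s⌉₊ hε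
  have := hN N le_rfl (s - (τ (φ N) + (φ N + 1))) (t - (τ (φ N) + (φ N + 1))) (by linarith)
    (by linarith [Nat.le_ceil (t - s)])
  rw [zero_add]
  rwa [hg_zero _ _ (by linarith), sub_zero, intervalIntegral.integral_comp_add_right,
    sub_add_cancel, sub_add_cancel] at this

theorem exists_abs_exp_neg_integral_sub_lt {g : ℝ → ℝ} (hg₀ : ∀ᵐ σ, 0 ≤ g σ)
    (hg : LocallyIntegrable g volume) {v : ℕ → ℝ}
    (h : StepanovTendsto (fun n σ => b (σ + v n)) g) {ε : ℝ} (hε : 0 < ε) :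
    ∃ N : ℕ, ∀ n ≥ N, ∀ s t : ℝ, s ≤ t →
      |Real.exp (-∫ σ in s..t, b (σ + v n)) - Real.exp (-∫ σ in s..t, g σ)| < ε := by
  have hbtr : ∀ n, LocallyIntegrable (fun σ => b (σ + v n)) volume :=
    fun n => hbloc.comp_add_right _
  rcases hb.uniform_mass_or_integral_eq_zero hb₀ hbloc with ⟨L, hL, c, hc, hmass⟩ | hzero
  · refine h.exists_abs_exp_neg_integral_sub_lt_of_uniform_mass hbtr hg (fun n σ => hb₀ _) hg₀
      hL hc (fun n t => ?_) hε
    rw [intervalIntegral.integral_comp_add_right, add_right_comm]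
    exact hmass _
  · have hzero' : ∀ n s t, s ≤ t → ∫ σ in s..t, b (σ + v n) = 0 := fun n s t hst => by
      rw [intervalIntegral.integral_comp_add_right]
      exact hzero _ _ (by linarith)
    refine ⟨0, fun n _ s t hst => ?_⟩
    rwa [hzero' n s t hst, h.integral_eq_zero hbtr hg hzero' hst, sub_self, abs_zero]

end IsStepanovAlmostPeriodic

theorem exists_norm_smul_sub_smul_lt {ι E : Type*} [SeminormedAddCommGroup E] [NormedSpace ℝ E]
    {S : Set ι} {a : ℕ → ι → ℝ} {a' : ι → ℝ} {x : ℕ → ι → E} {x' : ι → E} {C M : ℝ}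
    (ha_le : ∀ n, ∀ i ∈ S, |a n i| ≤ C) (hx'_le : ∀ i ∈ S, ‖x' i‖ ≤ M)
    (ha : ∀ ε > 0, ∃ N : ℕ, ∀ n ≥ N, ∀ i ∈ S, |a n i - a' i| < ε)
    (hx : ∀ ε > 0, ∃ N : ℕ, ∀ n ≥ N, ∀ i ∈ S, ‖x n i - x' i‖ < ε) {ε : ℝ} (hε : 0 < ε) :
    ∃ N : ℕ, ∀ n ≥ N, ∀ i ∈ S, ‖a n i • x n i - a' i • x' i‖ < ε := by
  obtain ⟨N₁, hN₁⟩ := ha (ε / 2 / (|M| + 1)) (by positivity)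
  obtain ⟨N₂, hN₂⟩ := hx (ε / 2 / (|C| + 1)) (by positivity)
  refine ⟨max N₁ N₂, fun n hn i hi => ?_⟩
  have hx_lt := hN₂ n (le_of_max_le_right hn) i hi
  have ha_lt := hN₁ n (le_of_max_le_left hn) i hi
  have hC : |a n i| ≤ |C| := (ha_le n i hi).trans (le_abs_self C)
  have hM : ‖x' i‖ ≤ |M| := (hx'_le i hi).trans (le_abs_self M)
  calc ‖a n i • x n i - a' i • x' i‖ ≤ |a n i| * ‖x n i - x' i‖ + |a n i - a' i| * ‖x' i‖ :=
        norm_smul_sub_smul_le _ _ _ _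
    _ ≤ |C| * (ε / 2 / (|C| + 1)) + ε / 2 / (|M| + 1) * |M| := by gcongr
    _ < (|C| + 1) * (ε / 2 / (|C| + 1)) + ε / 2 / (|M| + 1) * (|M| + 1) := by
        gcongr ?_ + ?_ <;> nlinarith [show 0 < ε / 2 / (|C| + 1) by positivity,
          show 0 < ε / 2 / (|M| + 1) by positivity]
    _ = ε := by field_simp; ring

theorem rescaled_evolution_family_bi_almost_periodic {X : Type*}
    [NormedAddCommGroup X] [NormedSpace ℝ X]
    (b : ℝ → ℝ) (hbnn : ∀ t, 0 ≤ b t)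
    (hbloc : LocallyIntegrable b volume)
    -- Bochner-type sequential S¹-almost periodicity of b
    (hb : ∀ u : ℕ → ℝ, ∃ φ : ℕ → ℕ, StrictMono φ ∧ ∃ btil : ℝ → ℝ,
      (∀ᵐ s : ℝ ∂volume, 0 ≤ btil s) ∧ LocallyIntegrable btil volume ∧
      ∀ ε > 0, ∃ N : ℕ, ∀ n ≥ N, ∀ t : ℝ,
        ∫ σ in t..t + 1, |b (σ + u (φ n)) - btil σ| < ε)
    (U₂ : ℝ → ℝ → X →L[ℝ] X) (M : ℝ)
    (hM : ∀ t s : ℝ, s ≤ t → ‖U₂ t s‖ ≤ M)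
    -- sequential bi-almost periodicity of the evolution family
    (hU : ∀ u : ℕ → ℝ, ∃ φ : ℕ → ℕ, StrictMono φ ∧ ∃ Util : ℝ → ℝ → X →L[ℝ] X,
      ∀ ε > 0, ∃ N : ℕ, ∀ n ≥ N, ∀ t s : ℝ, s ≤ t →
        ‖U₂ (t + u (φ n)) (s + u (φ n)) - Util t s‖ < ε) :
    ∀ u : ℕ → ℝ, ∃ φ : ℕ → ℕ, StrictMono φ ∧
      ∃ btil : ℝ → ℝ, ∃ Util : ℝ → ℝ → X →L[ℝ] X,
      ∀ ε > 0, ∃ N : ℕ, ∀ n ≥ N, ∀ t s : ℝ, s ≤ t →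
        ‖Real.exp (-∫ σ in s..t, b (σ + u (φ n))) • U₂ (t + u (φ n)) (s + u (φ n)) -
          Real.exp (-∫ σ in s..t, btil σ) • Util t s‖ < ε := by
  intro u
  have hb_ap : IsStepanovAlmostPeriodic b := fun u => by
    obtain ⟨φ, hφ, g, -, hg, hconv⟩ := hb u
    exact ⟨φ, hφ, g, hg, hconv⟩
  obtain ⟨φ₁, hφ₁, btil, hbtil₀, hbtil, hconv⟩ := hb u
  obtain ⟨φ₂, hφ₂, Util, hUtil⟩ := hU (u ∘ φ₁)
  refine ⟨φ₁ ∘ φ₂, hφ₁.comp hφ₂, btil, Util, fun ε hε => ?_⟩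
  have hUtil_le : ∀ t s, s ≤ t → ‖Util t s‖ ≤ M := fun t s hst =>
    le_of_forall_pos_lt_add fun δ hδ => by
      obtain ⟨N, hN⟩ := hUtil δ hδ
      exact (norm_le_norm_add_norm_sub _ _).trans_lt
        (add_lt_add_of_le_of_lt (hM _ _ (by linarith)) (hN N le_rfl t s hst))
  have hexp_le : ∀ n t s, s ≤ t → |Real.exp (-∫ σ in s..t, b (σ + u (φ₁ (φ₂ n))))| ≤ 1 :=
    fun n t s hst => by
      rw [abs_of_pos (Real.exp_pos _), Real.exp_le_one_iff, neg_nonpos]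
      exact intervalIntegral.integral_nonneg hst fun σ _ => hbnn _
  have hexp := fun δ (hδ : 0 < δ) => hb_ap.exists_abs_exp_neg_integral_sub_lt hbnn hbloc hbtil₀
    hbtil (StepanovTendsto.comp_strictMono hconv hφ₂) hδ
  obtain ⟨N, hN⟩ := exists_norm_smul_sub_smul_lt (S := {p : ℝ × ℝ | p.2 ≤ p.1})
    (fun n p hp => hexp_le n p.1 p.2 hp) (fun p hp => hUtil_le p.1 p.2 hp)
    (fun δ hδ => (hexp δ hδ).imp fun N hN n hn p hp => hN n hn p.2 p.1 hp)
    (fun δ hδ => (hUtil δ hδ).imp fun N hN n hn p hp => hN n hn p.1 p.2 hp) hε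
  exact ⟨N, fun n hn t s hst => hN n hn (t, s) hst⟩
end
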